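/- arXiv:1102.4835 — 5 statements merged into one kernel-verified Lean document; each statement's English description precedes it below -/
import Mathlib

section
/- Let R be an Artinian commutative ring that is not a field (more generally, not an integral domain). Then every nonzero proper ideal I of R is an annihilating ideal, i.e., there exists a nonzero ideal J of R with IJ = (0). -/
/-!
A proper ideal lies in a maximal ideal `m`. In an Artinian ring every prime is minimal, hence an
associated prime of `R`, so `m = ann x` for some `x ≠ 0`, and `J = (x)` is annihilated by `m`.
-/

namespace Ideal

variable {R : Type*} [CommRing R]

def IsAnnihilating (I : Ideal R) : Prop :=
  ∃ J : Ideal R, J ≠ ⊥ ∧ I * J = ⊥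

theorem IsAnnihilating.of_le {I I' : Ideal R} (h : I'.IsAnnihilating) (hI : I ≤ I') :
    I.IsAnnihilating := by
  obtain ⟨J, hJ, hI'J⟩ := h
  exact ⟨J, hJ, le_bot_iff.mp (hI'J ▸ mul_mono_left hI)⟩

theorem isAnnihilating_of_isAssociatedPrime [IsNoetherianRing R] {p : Ideal R}
    (hp : IsAssociatedPrime p R) : p.IsAnnihilating := by
  obtain ⟨hprime, x, rfl⟩ := isAssociatedPrime_iff.mp hp
  refine ⟨span {x}, fun hx ↦ hprime.ne_top ?_, ?_⟩
  · rw [span_singleton_eq_bot.mp hx, Submodule.colon_singleton_zero]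
  · refine le_bot_iff.mp (mul_le.mpr fun r hr s hs ↦ ?_)
    obtain ⟨t, rfl⟩ := mem_span_singleton'.mp hs
    rw [Submodule.mem_colon_singleton, Submodule.mem_bot, smul_eq_mul] at hr
    rw [Submodule.mem_bot, mul_left_comm, hr, mul_zero]

theorem isAssociatedPrime_of_isPrime [IsArtinianRing R] (p : Ideal R) [p.IsPrime] :
    IsAssociatedPrime p R :=
  Module.associatedPrimes.minimalPrimes_annihilator_subset_associatedPrimes R R <|
    IsArtinianRing.mem_minimalPrimes <|
      (Module.annihilator_eq_bot.mpr inferInstance).trans_le bot_le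

end Ideal

theorem stmt0_general (R : Type*) [CommRing R] [IsArtinianRing R]
    (I : Ideal R) (hItop : I ≠ ⊤) :
    ∃ J : Ideal R, J ≠ ⊥ ∧ I * J = ⊥ := by
  obtain ⟨m, hm, hIm⟩ := I.exists_le_maximal hItop
  exact (Ideal.isAnnihilating_of_isAssociatedPrime (Ideal.isAssociatedPrime_of_isPrime m)).of_le hIm

/-- In an Artinian commutative ring that is not an integral domain,
every nonzero proper ideal is an annihilating ideal. -/
theorem stmt0 (R : Type*) [CommRing R] [Nontrivial R] [IsArtinianRing R]
    (hR : ¬ IsDomain R) (I : Ideal R) (hI0 : I ≠ ⊥) (hItop : I ≠ ⊤) :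
    ∃ J : Ideal R, J ≠ ⊥ ∧ I * J = ⊥ :=
  stmt0_general R I hItop
end

section
/- Let (R, m) be a commutative local ring with m^t = (0) for some positive integer t. Suppose that for some positive integer n, the R/m-vector space m^n/m^{n+1} has dimension 1 and m^n is a finitely generated R-module. Then every ideal of R contained in m^n is a power of m, namely every nonzero ideal I ⊆ m^n equals m^i for some i with n ≤ i ≤ t. -/
open IsLocalRing

/-- Key step: if `m ^ i` is principal with `i ≥ 1`, then `m ^ (i+1)` is principal. -/
lemma step_principal (R : Type*) [CommRing R] [IsLocalRing R] (i : ℕ) (hi : 1 ≤ i) (y : R)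
    (h : (maximalIdeal R) ^ i = Ideal.span {y}) :
    ∃ z : R, (maximalIdeal R) ^ (i + 1) = Ideal.span {z} := by
  set m := maximalIdeal R with hm
  have hpow : m ^ i = m ^ (i - 1) * m := by
    rw [← pow_succ]
    congr 1
    omega
  have hpow1 : m ^ (i + 1) = Ideal.span {y} * m := by rw [pow_succ, h]
  by_cases hle : m ^ i ≤ m ^ (i + 1)
  · -- degenerate case: y ∈ m^{i+1} = (y) * m so y = y * c with c ∈ m, hence y = 0
    have hy : y ∈ Ideal.span {y} := Ideal.mem_span_singleton_self y
    have hy' : y ∈ Ideal.span {y} * m := by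
      rw [← hpow1]; exact hle (h ▸ hy)
    obtain ⟨c, hc, hcy⟩ := Ideal.mem_span_singleton_mul.mp hy'
    have hunit : IsUnit (1 - c) :=
      IsLocalRing.isUnit_one_sub_self_of_mem_nonunits c
        ((IsLocalRing.mem_maximalIdeal c).mp hc)
    have hyz : (1 - c) * y = 0 := by linear_combination -hcy
    have hy0 : y = 0 := by
      have := (IsUnit.mul_right_eq_zero hunit).mp hyz
      exact this
    refine ⟨0, le_antisymm ?_ ?_⟩
    · calc m ^ (i+1) ≤ m ^ i := Ideal.pow_le_pow_right (by omega)
        _ = Ideal.span {y} := h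
        _ = Ideal.span {0} := by rw [hy0]
    · simp [Ideal.span_singleton_eq_bot.mpr rfl]
  · -- main case: find a ∈ m^{i-1}, b ∈ m with a*b ∉ m^{i+1}
    have hexists : ∃ a ∈ m ^ (i - 1), ∃ b ∈ m, a * b ∉ m ^ (i + 1) := by
      by_contra hcon
      push_neg at hcon
      apply hle
      rw [hpow]
      exact Ideal.mul_le.mpr hcon
    obtain ⟨a, ha, b, hb, hab⟩ := hexists
    have habi : a * b ∈ Ideal.span {y} := by
      rw [← h, hpow]; exact Ideal.mul_mem_mul ha hb
    obtain ⟨r, hr⟩ := Ideal.mem_span_singleton.mp habi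
    -- r is a unit
    have hru : IsUnit r := by
      by_contra hrnu
      apply hab
      rw [hpow1, hr]
      exact Ideal.mul_mem_mul (Ideal.mem_span_singleton_self y) hrnu
    obtain ⟨u, hu⟩ := hru
    -- y = g * b with g = u⁻¹ * a ∈ m^{i-1}
    set g : R := (↑u⁻¹ : R) * a with hg
    have hgmem : g ∈ m ^ (i - 1) := Ideal.mul_mem_left _ _ ha
    have hygb : y = g * b := by
      calc y = (↑u⁻¹ * ↑u : R) * y := by rw [Units.inv_mul, one_mul]
        _ = (↑u⁻¹ : R) * (y * ↑u) := by ring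
        _ = (↑u⁻¹ : R) * (y * r) := by rw [hu]
        _ = (↑u⁻¹ : R) * (a * b) := by rw [← hr]
        _ = g * b := by rw [hg]; ring
    refine ⟨y * b, le_antisymm ?_ ?_⟩
    · rw [hpow1]
      apply Ideal.mul_le.mpr
      intro p hp s hs
      obtain ⟨e, he⟩ := Ideal.mem_span_singleton.mp hp
      have hgs : g * s ∈ Ideal.span {y} := by
        rw [← h, hpow]
        exact Ideal.mul_mem_mul hgmem hs
      obtain ⟨d, hd⟩ := Ideal.mem_span_singleton.mp hgs
      apply Ideal.mem_span_singleton'.mpr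
      refine ⟨e * d, ?_⟩
      calc e * d * (y * b) = e * (y * d) * b := by ring
        _ = e * (g * s) * b := by rw [hd]
        _ = (y * e) * s := by rw [hygb]; ring
        _ = p * s := by rw [← he]
    · rw [Ideal.span_singleton_le_iff_mem, hpow1]
      exact Ideal.mul_mem_mul (Ideal.mem_span_singleton_self y) hb

/-- If `(R, m)` is local with `m ^ t = 0`, `m ^ n / m ^ (n+1)` is one-dimensional over
`R/m` and `m ^ n` is finitely generated, then every nonzero ideal contained in `m ^ n`
is a power `m ^ i` with `n ≤ i ≤ t`. -/
theorem stmt2 (R : Type*) [CommRing R] [IsLocalRing R] (t n : ℕ) (ht : 0 < t) (hn : 0 < n)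
    (hmt : (maximalIdeal R) ^ t = ⊥)
    (hdim : Nonempty
      ((↥((maximalIdeal R) ^ n) ⧸
          (Submodule.comap ((maximalIdeal R) ^ n).subtype ((maximalIdeal R) ^ (n + 1))))
        ≃ₗ[R] ResidueField R))
    (hfg : ((maximalIdeal R) ^ n).FG)
    (I : Ideal R) (hI0 : I ≠ ⊥) (hI : I ≤ (maximalIdeal R) ^ n) :
    ∃ i : ℕ, n ≤ i ∧ i ≤ t ∧ I = (maximalIdeal R) ^ i := by
  classical
  set m := maximalIdeal R with hm
  obtain ⟨φ⟩ := hdim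
  -- find x with m^n = span {x}
  obtain ⟨x0, hx0⟩ := Submodule.Quotient.mk_surjective _ (φ.symm 1)
  set x : R := (x0 : R) with hx
  have hxmem : x ∈ m ^ n := x0.2
  have hsm : ∀ c : R, c • (1 : ResidueField R) = Ideal.Quotient.mk (maximalIdeal R) c := by
    intro c
    rw [Algebra.smul_def, mul_one]
    rfl
  have hsmul : m • (m ^ n : Ideal R) = m ^ (n + 1) := by
    rw [smul_eq_mul, ← pow_succ']
  have hspan : m ^ n = Ideal.span {x} := by
    have hle1 : m ^ n ≤ Ideal.span {x} ⊔ m • (m ^ n : Ideal R) := by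
      intro w hw
      obtain ⟨c, hc⟩ := Ideal.Quotient.mk_surjective
        (I := maximalIdeal R) (φ (Submodule.Quotient.mk ⟨w, hw⟩))
      have hker : (⟨w, hw⟩ - c • x0 : ↥(m ^ n)) ∈
          Submodule.comap ((m : Ideal R) ^ n).subtype ((m : Ideal R) ^ (n + 1)) := by
        rw [← Submodule.Quotient.mk_eq_zero]
        apply φ.injective
        rw [map_zero, Submodule.Quotient.mk_sub, Submodule.Quotient.mk_smul, map_sub,
          map_smul, hx0, LinearEquiv.apply_symm_apply, hsm c, hc, sub_self]
      have hmem : w - c * x ∈ m ^ (n + 1) := by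
        have := Submodule.mem_comap.mp hker
        simpa using this
      apply Submodule.mem_sup.mpr
      refine ⟨c * x, Ideal.mem_span_singleton'.mpr ⟨c, rfl⟩, w - c * x, ?_, by ring⟩
      rw [hsmul]; exact hmem
    have hle2 : m ^ n ≤ Ideal.span {x} :=
      Submodule.le_of_le_smul_of_le_jacobson_bot hfg
        ((IsLocalRing.jacobson_eq_maximalIdeal ⊥ bot_ne_top).ge) hle1
    exact le_antisymm hle2 (by rwa [Ideal.span_singleton_le_iff_mem])
  -- m^i is principal for all i ≥ n
  have hprin : ∀ j : ℕ, ∃ y : R, m ^ (n + j) = Ideal.span {y} := by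
    intro j
    induction j with
    | zero => exact ⟨x, hspan⟩
    | succ k ih =>
      obtain ⟨y, hy⟩ := ih
      obtain ⟨z, hz⟩ := step_principal R (n + k) (by omega) y hy
      exact ⟨z, hz⟩
  -- find the largest i with I ≤ m^i
  have hPt : ¬ I ≤ m ^ t := by rw [hmt]; exact fun h => hI0 (le_bot_iff.mp h)
  have hfindable : ∃ j, ¬ I ≤ m ^ j := ⟨t, hPt⟩
  have hj0spec : ¬ I ≤ m ^ (Nat.find hfindable) := Nat.find_spec hfindable
  have hj0t : Nat.find hfindable ≤ t := Nat.find_le hPt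
  have hj0n : n < Nat.find hfindable := by
    rcases Nat.lt_or_ge n (Nat.find hfindable) with h | h
    · exact h
    · exact absurd (hI.trans (Ideal.pow_le_pow_right h)) hj0spec
  set i := Nat.find hfindable - 1 with hi
  have hIi : I ≤ m ^ i := by
    by_contra hcon
    have hle' : Nat.find hfindable ≤ i := Nat.find_le hcon
    omega
  have hIsucc : ¬ I ≤ m ^ (i + 1) := by
    have : i + 1 = Nat.find hfindable := by omega
    rw [this]; exact hj0spec
  refine ⟨i, by omega, by omega, ?_⟩
  obtain ⟨y, hy⟩ : ∃ y : R, m ^ i = Ideal.span {y} := by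
    obtain ⟨y, hy⟩ := hprin (i - n)
    exact ⟨y, by rw [← hy]; congr 1; omega⟩
  obtain ⟨w, hwI, hwn⟩ := SetLike.not_le_iff_exists.mp hIsucc
  have hwmem : w ∈ Ideal.span {y} := hy ▸ hIi hwI
  obtain ⟨c, hc⟩ := Ideal.mem_span_singleton.mp hwmem
  have hcu : IsUnit c := by
    by_contra hcnu
    apply hwn
    rw [pow_succ, hy, hc]
    exact Ideal.mul_mem_mul (Ideal.mem_span_singleton_self y) hcnu
  obtain ⟨u, hu⟩ := hcu
  have hyI : y ∈ I := by
    have hyw : y = (↑u⁻¹ : R) * w := by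
      rw [hc, ← hu]
      calc y = (↑u⁻¹ * ↑u : R) * y := by rw [Units.inv_mul, one_mul]
        _ = (↑u⁻¹ : R) * (y * ↑u) := by ring
    rw [hyw]
    exact Ideal.mul_mem_left _ _ hwI
  have hmiI : m ^ i ≤ I := by
    rw [hy]
    exact (Ideal.span_singleton_le_iff_mem _).mpr hyI
  exact le_antisymm hIi hmiI
end

section
/- Let (R, m) be an Artinian commutative local ring with residue field of cardinality q and with only finitely many ideals. Then for every positive integer i, |m^i| ≤ q^{N_i}, where N_i is the number of ideals of R contained in m^i. -/
/-!
Nothing about `m ^ i` matters: the bound holds for every submodule `N` of a module with finitely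
many submodules. If `P ⋖ N` then `N ⧸ P` is simple, hence isomorphic to the residue field, so
`|N| = q |P|`, while strictly fewer submodules lie below `P` than below `N`; induct on `N`.
-/

open IsLocalRing

section

variable {R M : Type*} [CommRing R] [IsLocalRing R] [AddCommGroup M] [Module R M]

theorem IsSimpleModule.card_eq_card_residueField [IsSimpleModule R M] :
    Nat.card M = Nat.card (ResidueField R) := by
  obtain ⟨I, hI, ⟨e⟩⟩ := isSimpleModule_iff_quot_maximal.mp ‹IsSimpleModule R M›
  rw [Nat.card_congr e.toEquiv, eq_maximalIdeal hI]
  rfl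

namespace Submodule

theorem card_eq_card_residueField_mul_of_covBy {P N : Submodule R M} (h : P ⋖ N) :
    Nat.card N = Nat.card (ResidueField R) * Nat.card P := by
  have : IsSimpleModule R (N ⧸ P.comap N.subtype) := (covBy_iff_quot_is_simple h.le).mp h
  rw [(P.comap N.subtype).card_eq_card_quotient_mul_card, mul_comm,
    IsSimpleModule.card_eq_card_residueField (R := R),
    Nat.card_congr (comapSubtypeEquivOfLe h.le).toEquiv]

theorem card_le_card_residueField_pow [Finite (ResidueField R)] [Finite (Submodule R M)]
    (N : Submodule R M) :
    Nat.card N ≤ Nat.card (ResidueField R) ^ Nat.card {P : Submodule R M // P ≤ N} := by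
  induction N using WellFoundedLT.induction with
  | _ N ih =>
    rcases eq_or_ne N ⊥ with rfl | hN
    · simpa [Nat.one_le_iff_ne_zero] using Nat.card_pos.ne'
    obtain ⟨P, -, hPN⟩ := exists_le_covBy_of_lt (bot_lt_iff_ne_bot.mpr hN)
    have hfewer : Nat.card {Q : Submodule R M // Q ≤ P} < Nat.card {Q : Submodule R M // Q ≤ N} :=
      Set.ncard_lt_ncard (Set.Iic_ssubset_Iic.mpr hPN.lt) (Set.toFinite _)
    calc Nat.card N = Nat.card (ResidueField R) * Nat.card P :=
          card_eq_card_residueField_mul_of_covBy hPN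
      _ ≤ Nat.card (ResidueField R) * Nat.card (ResidueField R) ^
            Nat.card {Q : Submodule R M // Q ≤ P} := Nat.mul_le_mul_left _ (ih P hPN.lt)
      _ = Nat.card (ResidueField R) ^ (Nat.card {Q : Submodule R M // Q ≤ P} + 1) := by ring
      _ ≤ Nat.card (ResidueField R) ^ Nat.card {Q : Submodule R M // Q ≤ N} :=
          Nat.pow_le_pow_right Nat.card_pos hfewer

end Submodule

end

theorem stmt6_general (R : Type*) [CommRing R] [IsLocalRing R]
    [Finite (ResidueField R)] [Finite (Ideal R)] (i : ℕ) :
    Nat.card ↥((maximalIdeal R) ^ i) ≤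
      (Nat.card (ResidueField R)) ^ (Nat.card {I : Ideal R // I ≤ (maximalIdeal R) ^ i}) :=
  Submodule.card_le_card_residueField_pow _

/-- An Artinian local ring with residue field of cardinality `q` and finitely many
ideals satisfies `|m ^ i| ≤ q ^ N_i` for every positive `i`, where `N_i` is the
number of ideals contained in `m ^ i`. -/
theorem stmt6 (R : Type*) [CommRing R] [IsLocalRing R] [IsArtinianRing R]
    [Finite (ResidueField R)] [Finite (Ideal R)] (i : ℕ) (hi : 0 < i) :
    Nat.card ↥((maximalIdeal R) ^ i) ≤
      (Nat.card (ResidueField R)) ^ (Nat.card {I : Ideal R // I ≤ (maximalIdeal R) ^ i}) :=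
  stmt6_general R i
end

section
/- Let (R, m) be an Artinian commutative local ring with m^3 = (0) and m^2 ≠ (0), and let x ∈ m with x ∉ m^2. If the cyclic module Rx has exactly one nonzero proper R-submodule, then dim_{R/m}(Ann(x)/m^2) = dim_{R/m}(m/m^2) − 1. -/
/-!
Write `A = Ann(x)`. Since `Rx ≅ R/A`, the submodules of `Rx` are the ideals containing `A`, so
the unique nonzero proper submodule is an ideal that is at once an atom above `A` and a coatom,
i.e. `A ⋖ m`, and `m/A` is simple. As `m³ = 0` and `x ∈ m` we have `m² ≤ A ≤ m`, so lengths add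
along `m² ≤ A ≤ m`: `ℓ(A/m²) + 1 = ℓ(m/m²) = k`. Finally `A/m²` is killed by `m`, hence a
vector space over `R/m` of dimension `k - 1`.
-/

open IsLocalRing Module Submodule

theorem exists_isAtom_and_isCoatom_of_existsUnique {α : Type*} [PartialOrder α] [BoundedOrder α]
    (h : ∃! a : α, a ≠ ⊥ ∧ a ≠ ⊤) : ∃ a : α, IsAtom a ∧ IsCoatom a := by
  obtain ⟨a, ha, huniq⟩ := h
  refine ⟨a, ⟨ha.1, fun b hb => ?_⟩, ⟨ha.2, fun b hb => ?_⟩⟩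
  · by_contra hb0
    exact hb.ne (huniq b ⟨hb0, (hb.trans_le le_top).ne⟩)
  · by_contra hbt
    exact hb.ne' (huniq b ⟨(bot_le.trans_lt hb).ne', hbt⟩)

theorem annihilator_covBy_maximalIdeal {R M : Type*} [CommRing R] [IsLocalRing R]
    [AddCommGroup M] [Module R M] {x : M} (h : ∃! N : Submodule R (R ∙ x), N ≠ ⊥ ∧ N ≠ ⊤) :
    (R ∙ x).annihilator ⋖ maximalIdeal R := by
  let e : Submodule R (R ∙ x) ≃o Set.Ici (Ideal.torsionOf R M x) :=
    (orderIsoMapComap (Ideal.quotTorsionOfEquivSpanSingleton R M x).symm).trans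
      (comapMkQRelIso _)
  obtain ⟨N, hatom, hcoatom⟩ := exists_isAtom_and_isCoatom_of_existsUnique h
  have hcov : Ideal.torsionOf R M x ⋖ (e N : Ideal R) :=
    Set.Ici.isAtom_iff.mp ((e.isAtom_iff N).mpr hatom)
  have hmax : (e N : Ideal R) = maximalIdeal R :=
    eq_maximalIdeal (Ideal.isMaximal_def.mpr ((e.isCoatom_iff N).mpr hcoatom).of_isCoatom_coe_Ici)
  rw [Ideal.annihilator_span_singleton_eq_torsionOf, ← hmax]
  exact hcov

theorem Ideal.pow_le_annihilator_span_singleton {R : Type*} [CommRing R] {I : Ideal R} {n : ℕ}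
    (h : I ^ (n + 1) = ⊥) {x : R} (hx : x ∈ I) : I ^ n ≤ (R ∙ x).annihilator := fun y hy => by
  rw [mem_annihilator_span_singleton, smul_eq_mul, ← Ideal.mem_bot, ← h, pow_succ]
  exact Ideal.mul_mem_mul hy hx

theorem Submodule.length_subquotient_add_length_subquotient {R M : Type*} [Ring R]
    [AddCommGroup M] [Module R M] {N₁ N₂ N₃ : Submodule R M} (h₁₂ : N₁ ≤ N₂) (h₂₃ : N₂ ≤ N₃) :
    length R (N₂ ⧸ N₁.comap N₂.subtype) + length R (N₃ ⧸ N₂.comap N₃.subtype) =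
      length R (N₃ ⧸ N₁.comap N₃.subtype) := by
  let f := mapQ (N₁.comap N₂.subtype) (N₁.comap N₃.subtype) (inclusion h₂₃) fun _ h => h
  let g := factor (comap_mono (f := N₃.subtype) h₁₂)
  have hf : Function.Injective f := by
    rw [← LinearMap.ker_eq_bot]
    exact ker_liftQ_eq_bot _ _ _ fun y hy => by
      simpa [mkQ_apply, Quotient.mk_eq_zero] using hy
  have hfg : Function.Exact f g := by
    intro y
    obtain ⟨z, rfl⟩ := mkQ_surjective _ y
    change mkQ _ z = 0 ↔ _
    rw [mkQ_apply, mkQ_apply, Quotient.mk_eq_zero, mem_comap, subtype_apply]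
    constructor
    · intro hz
      exact ⟨Quotient.mk ⟨z, hz⟩, rfl⟩
    · rintro ⟨w, hw⟩
      obtain ⟨w, rfl⟩ := mkQ_surjective _ w
      have : ((inclusion h₂₃ w - z : N₃) : M) ∈ N₁ := (Quotient.eq (N₁.comap N₃.subtype)).mp hw
      simpa using N₂.sub_mem w.2 (h₁₂ this)
  exact (length_eq_add_of_exact f g hf (factor_surjective _) hfg).symm

theorem IsLocalRing.length_residueField (R : Type*) [CommRing R] [IsLocalRing R] :
    length R (ResidueField R) = 1 := by
  rw [length_eq_of_surjective (R := ResidueField R) residue_surjective, length_eq_one]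

theorem nonempty_linearEquiv_pi_residueField {R V : Type*} [CommRing R] [IsLocalRing R]
    [AddCommGroup V] [Module R V] (hV : IsTorsionBySet R V (maximalIdeal R)) {n : ℕ}
    (h : length R V = n) : Nonempty (V ≃ₗ[R] Fin n → ResidueField R) := by
  let : Module (ResidueField R) V := hV.module
  have : IsScalarTower R (ResidueField R) V := hV.isScalarTower
  have hrank : Module.rank (ResidueField R) V = n := by
    rw [length_eq_of_surjective (R := ResidueField R) residue_surjective, length_eq_rank] at h
    exact Cardinal.toENat_eq_natCast.mp h
  obtain ⟨f⟩ : Nonempty (V ≃ₗ[ResidueField R] Fin n → ResidueField R) :=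
    nonempty_linearEquiv_of_lift_rank_eq (by simp [hrank])
  exact ⟨f.restrictScalars R⟩

theorem stmt8_general (R : Type*) [CommRing R] [IsLocalRing R]
    (hm3 : (maximalIdeal R) ^ 3 = ⊥)
    (x : R) (hx : x ∈ maximalIdeal R)
    (huniq : ∃! N : Submodule R ↥(Submodule.span R {x}), N ≠ ⊥ ∧ N ≠ ⊤)
    (k : ℕ)
    (hk : Nonempty
      ((↥(maximalIdeal R) ⧸
          (Submodule.comap (maximalIdeal R).subtype ((maximalIdeal R) ^ 2)))
        ≃ₗ[R] (Fin k → ResidueField R))) :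
    Nonempty
      ((↥((Submodule.span R {x}).annihilator) ⧸
          (Submodule.comap ((Submodule.span R {x}).annihilator : Ideal R).subtype
            ((maximalIdeal R) ^ 2)))
        ≃ₗ[R] (Fin (k - 1) → ResidueField R)) := by
  set m := maximalIdeal R
  set A := (R ∙ x).annihilator
  have hAm : A ⋖ m := annihilator_covBy_maximalIdeal huniq
  have hm2A : m ^ 2 ≤ A := Ideal.pow_le_annihilator_span_singleton hm3 hx
  have : IsSimpleModule R (↥m ⧸ Submodule.comap m.subtype A) :=
    (covBy_iff_quot_is_simple hAm.le).mp hAm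
  obtain ⟨e⟩ := hk
  have hlen : length R (↥A ⧸ Submodule.comap A.subtype (m ^ 2)) + 1 = k := by
    rw [← length_eq_one R (↥m ⧸ Submodule.comap m.subtype A),
      length_subquotient_add_length_subquotient hm2A hAm.le, e.length_eq, length_pi,
      length_residueField]
    simp
  obtain ⟨l, hl⟩ :=
    ENat.ne_top_iff_exists.mp (WithTop.add_ne_top.mp (hlen ▸ ENat.natCast_ne_top k)).1
  have hlk : l + 1 = k := by exact_mod_cast hl ▸ hlen
  have htors : IsTorsionBySet R (↥A ⧸ Submodule.comap A.subtype (m ^ 2)) m :=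
    (isTorsionBySet_quotient_iff _ _).mpr fun y r hr => by
      rw [pow_two]
      exact Ideal.mul_mem_mul hr (hAm.le y.2)
  exact nonempty_linearEquiv_pi_residueField htors (by rw [← hl, ← hlk, Nat.add_sub_cancel])

/-- Let `(R, m)` be Artinian local with `m ^ 3 = 0 ≠ m ^ 2` and `x ∈ m \ m ^ 2`.
If `Rx` has exactly one nonzero proper submodule, then
`dim_{R/m} (Ann(x)/m²) = dim_{R/m} (m/m²) − 1`. -/
theorem stmt8 (R : Type*) [CommRing R] [IsLocalRing R] [IsArtinianRing R]
    (hm3 : (maximalIdeal R) ^ 3 = ⊥) (hm2 : (maximalIdeal R) ^ 2 ≠ ⊥)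
    (x : R) (hx : x ∈ maximalIdeal R) (hx2 : x ∉ (maximalIdeal R) ^ 2)
    (huniq : ∃! N : Submodule R ↥(Submodule.span R {x}), N ≠ ⊥ ∧ N ≠ ⊤)
    (k : ℕ)
    (hk : Nonempty
      ((↥(maximalIdeal R) ⧸
          (Submodule.comap (maximalIdeal R).subtype ((maximalIdeal R) ^ 2)))
        ≃ₗ[R] (Fin k → ResidueField R))) :
    Nonempty
      ((↥((Submodule.span R {x}).annihilator) ⧸
          (Submodule.comap ((Submodule.span R {x}).annihilator : Ideal R).subtype
            ((maximalIdeal R) ^ 2)))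
        ≃ₗ[R] (Fin (k - 1) → ResidueField R)) :=
  stmt8_general R hm3 x hx huniq k hk
end

section
/- Let (R, m) be a commutative Noetherian local ring, P a prime ideal with P ≠ m, and x ∈ R a nonzero element with Ann(x) = P such that the cyclic module Rx has exactly one nonzero proper R-submodule. Then a contradiction follows; equivalently: if Rx has exactly one nonzero proper submodule and Ann(x) is prime, then Ann(x) = m. -/
open IsLocalRing

lemma aux_smul_top_eq_bot {R : Type*} [CommRing R] {S : Submodule R R} {I : Ideal R}
    (h : I • (⊤ : Submodule R ↥S) = ⊥) : I ≤ S.annihilator := by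
  intro r hr
  rw [Submodule.mem_annihilator]
  intro s hs
  have : r • (⟨s, hs⟩ : ↥S) ∈ I • (⊤ : Submodule R ↥S) :=
    Submodule.smul_mem_smul hr trivial
  rw [h, Submodule.mem_bot] at this
  exact congrArg Subtype.val this

/-- In a commutative Noetherian local ring, if `x ≠ 0`, the cyclic module `Rx` has
exactly one nonzero proper submodule, and `Ann(x)` is prime, then `Ann(x) = m`. -/
theorem stmt13 (R : Type*) [CommRing R] [IsLocalRing R] [IsNoetherianRing R]
    (x : R) (hx : x ≠ 0)
    (huniq : ∃! N : Submodule R ↥(Submodule.span R {x}), N ≠ ⊥ ∧ N ≠ ⊤)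
    (hprime : ((Submodule.span R {x}).annihilator).IsPrime) :
    (Submodule.span R {x}).annihilator = maximalIdeal R := by
  set S := Submodule.span R {x} with hS
  by_contra hne
  have hjac : Ideal.jacobson (⊥ : Ideal R) = maximalIdeal R :=
    jacobson_eq_maximalIdeal ⊥ bot_ne_top
  have hannle : S.annihilator ≤ maximalIdeal R := le_maximalIdeal hprime.ne_top
  set M := (maximalIdeal R) • (⊤ : Submodule R ↥S) with hM
  set N := (maximalIdeal R) • M with hN
  -- M ≠ ⊤
  have hMt : M ≠ ⊤ := by
    intro h
    have hbot : (⊤ : Submodule R ↥S) = ⊥ :=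
      Submodule.eq_bot_of_le_smul_of_le_jacobson_bot (maximalIdeal R) ⊤
        (IsNoetherian.noetherian ⊤) (h.symm.le) (hjac ▸ le_refl _)
    have hxS : x ∈ S := Submodule.mem_span_singleton_self x
    have : (⟨x, hxS⟩ : ↥S) = 0 := by
      have := hbot ▸ (Submodule.mem_top : (⟨x, hxS⟩ : ↥S) ∈ ⊤)
      simpa using this
    exact hx (congrArg Subtype.val this)
  -- M ≠ ⊥
  have hMb : M ≠ ⊥ := by
    intro h
    exact hne (le_antisymm hannle (aux_smul_top_eq_bot h))
  -- N ≠ ⊤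
  have hNleM : N ≤ M := Submodule.smul_le_right
  have hNt : N ≠ ⊤ := fun h => hMt (top_le_iff.mp (h ▸ hNleM))
  -- N ≠ ⊥
  have hNb : N ≠ ⊥ := by
    intro h
    have h2 : ((maximalIdeal R) ^ 2) • (⊤ : Submodule R ↥S) = ⊥ := by
      rw [pow_two, ← Ideal.smul_eq_mul, Submodule.smul_assoc]
      exact h
    have hsq : (maximalIdeal R) ^ 2 ≤ S.annihilator := aux_smul_top_eq_bot h2
    have : maximalIdeal R ≤ S.annihilator := hprime.le_of_pow_le hsq
    exact hne (le_antisymm hannle this)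
  -- uniqueness forces N = M
  obtain ⟨N0, _, huniq'⟩ := huniq
  have hMN : N = M := (huniq' N ⟨hNb, hNt⟩).trans (huniq' M ⟨hMb, hMt⟩).symm
  -- Nakayama
  have : M = ⊥ :=
    Submodule.eq_bot_of_le_smul_of_le_jacobson_bot (maximalIdeal R) M
      (IsNoetherian.noetherian M) (hMN.symm.le) (hjac ▸ le_refl _)
  exact hMb this
end
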